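/- If A and B are 2×2 non-negative integer matrices with AB = F^m for some m ≥ 1, where F = [[1,1],[1,0]] is the Fibonacci matrix, then there exist k, l ∈ ℕ ∪ {0} with k + l = m such that either A = F^k and B = F^l, or A = F^k·J and B = J·F^l, where J = [[0,1],[1,0]]. -/

import Mathlib

/-!
A nonnegative integer matrix is `F` times a nonnegative one exactly when its first row dominates
its second. Since `det (A * B) = ±1`, the rows of `A` are comparable unless `A` is `1` or `J`
(incomparable rows force `|det A| ≥ 1 + (off-diagonal entries)`). If the first row of `A`
dominates, peel off `A = F * C` and induct on `m` with `C * B = F ^ (m - 1)`. If the second row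
dominates, then `J * A = F * C`, so `J * F ^ m = F * (C * B)` has a dominant first row; but the
second row of `F ^ m` never dominates its first: for `m ≥ 1` the first row dominates, and the
rows cannot coincide since `det (F ^ m) ≠ 0`.
-/

/-- The Fibonacci matrix. -/
def F : Matrix (Fin 2) (Fin 2) ℤ := !![1, 1; 1, 0]

/-- The flip matrix. -/
def J : Matrix (Fin 2) (Fin 2) ℤ := !![0, 1; 1, 0]

lemma Matrix.mul_apply_nonneg {l m n α : Type*} [Fintype m] [Semiring α] [PartialOrder α]
    [IsOrderedRing α] {A : Matrix l m α} {B : Matrix m n α} (hA : ∀ i j, 0 ≤ A i j)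
    (hB : ∀ i j, 0 ≤ B i j) (i : l) (j : n) : 0 ≤ (A * B) i j :=
  Finset.sum_nonneg fun k _ => mul_nonneg (hA i k) (hB k j)

lemma det_F : F.det = -1 := by
  simp [F, Matrix.det_fin_two_of]

lemma det_J : J.det = -1 := by
  simp [J, Matrix.det_fin_two_of]

lemma isUnit_F : IsUnit F :=
  (Matrix.isUnit_iff_isUnit_det F).2 (det_F ▸ isUnit_one.neg)

lemma J_mul_J : J * J = 1 := by
  simp [J, Matrix.one_fin_two]

lemma F_nonneg (i j : Fin 2) : 0 ≤ F i j := by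
  fin_cases i <;> fin_cases j <;> simp [F]

lemma J_nonneg (i j : Fin 2) : 0 ≤ J i j := by
  fin_cases i <;> fin_cases j <;> simp [J]

@[simp] lemma F_mul_apply_zero (M : Matrix (Fin 2) (Fin 2) ℤ) (j : Fin 2) :
    (F * M) 0 j = M 0 j + M 1 j := by
  simp [F, Matrix.mul_apply, Fin.sum_univ_two]

@[simp] lemma F_mul_apply_one (M : Matrix (Fin 2) (Fin 2) ℤ) (j : Fin 2) :
    (F * M) 1 j = M 0 j := by
  simp [F, Matrix.mul_apply, Fin.sum_univ_two]

@[simp] lemma J_mul_apply_zero (M : Matrix (Fin 2) (Fin 2) ℤ) (j : Fin 2) :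
    (J * M) 0 j = M 1 j := by
  simp [J, Matrix.mul_apply, Fin.sum_univ_two]

@[simp] lemma J_mul_apply_one (M : Matrix (Fin 2) (Fin 2) ℤ) (j : Fin 2) :
    (J * M) 1 j = M 0 j := by
  simp [J, Matrix.mul_apply, Fin.sum_univ_two]

theorem exists_nonneg_F_mul_iff (A : Matrix (Fin 2) (Fin 2) ℤ) :
    (∃ C : Matrix (Fin 2) (Fin 2) ℤ, (∀ i j, 0 ≤ C i j) ∧ A = F * C) ↔
      (∀ i j, 0 ≤ A i j) ∧ ∀ j, A 1 j ≤ A 0 j := by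
  constructor
  · rintro ⟨C, hC, rfl⟩
    refine ⟨fun i j => ?_, fun j => ?_⟩
    · fin_cases i <;> simp [add_nonneg, hC]
    · simpa using hC 1 j
  · rintro ⟨hA, hrow⟩
    refine ⟨!![A 1 0, A 1 1; A 0 0 - A 1 0, A 0 1 - A 1 1], fun i j => ?_, ?_⟩
    · fin_cases i <;> fin_cases j <;> simp [hA, hrow]
    · ext i j
      fin_cases i <;> fin_cases j <;> simp

lemma F_pow_not_row_zero_le_row_one (m : ℕ) : ¬ ∀ j, (F ^ m) 0 j ≤ (F ^ m) 1 j := by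
  intro hle
  cases m with
  | zero => simpa using hle 0
  | succ n =>
    have hrow : ∀ j, (F ^ n) 1 j = 0 := fun j => by
      have hle := hle j
      rw [pow_succ', F_mul_apply_zero, F_mul_apply_one] at hle
      exact le_antisymm (by omega) (Matrix.pow_apply_nonneg F_nonneg n 1 j)
    have hdet : (F ^ n).det = (-1) ^ n := by rw [Matrix.det_pow, det_F]
    rw [Matrix.det_fin_two, hrow 0, hrow 1, mul_zero, mul_zero, sub_zero] at hdet
    exact pow_ne_zero n (by norm_num) hdet.symm

lemma eq_one_of_offDiag_lt_diag {A : Matrix (Fin 2) (Fin 2) ℤ} (hA : ∀ i j, 0 ≤ A i j)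
    (hdet : IsUnit A.det) (h0 : A 1 0 < A 0 0) (h1 : A 0 1 < A 1 1) : A = 1 := by
  rw [Matrix.det_fin_two, Int.isUnit_iff] at hdet
  have := hA 0 0; have := hA 0 1; have := hA 1 0; have := hA 1 1
  have hprod : (A 1 0 + 1) * (A 0 1 + 1) ≤ A 0 0 * A 1 1 :=
    mul_le_mul (by omega) (by omega) (by omega) (by omega)
  have hsum : A 0 1 + A 1 0 ≤ 0 := by rcases hdet with h | h <;> linarith
  have hb : A 0 1 = 0 := by omega
  have hc : A 1 0 = 0 := by omega
  have had : A 0 0 * A 1 1 = 1 := by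
    rw [hb, hc] at hdet; rcases hdet with h | h <;> nlinarith
  ext i j
  fin_cases i <;> fin_cases j <;> simp [hb, hc, Int.eq_one_of_mul_eq_one_right (hA 0 0) had,
    Int.eq_one_of_mul_eq_one_left (hA 1 1) had]

lemma rows_le_or_eq_one_or_eq_J {A : Matrix (Fin 2) (Fin 2) ℤ} (hA : ∀ i j, 0 ≤ A i j)
    (hdet : IsUnit A.det) :
    (∀ j, A 1 j ≤ A 0 j) ∨ (∀ j, A 0 j ≤ A 1 j) ∨ A = 1 ∨ A = J := by
  simp only [Fin.forall_fin_two]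
  by_cases hid : A 1 0 < A 0 0 ∧ A 0 1 < A 1 1
  · exact .inr (.inr (.inl (eq_one_of_offDiag_lt_diag hA hdet hid.1 hid.2)))
  by_cases hflip : A 0 0 < A 1 0 ∧ A 1 1 < A 0 1
  · have hJA : J * A = 1 := by
      refine eq_one_of_offDiag_lt_diag (Matrix.mul_apply_nonneg J_nonneg hA) ?_ ?_ ?_
      · rw [Matrix.det_mul, det_J]
        exact isUnit_one.neg.mul hdet
      · simpa using hflip.1
      · simpa using hflip.2
    refine .inr (.inr (.inr ?_))
    rw [← one_mul A, ← J_mul_J, mul_assoc, hJA, mul_one]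
  omega

lemma eq_one_or_eq_J_or_eq_F_mul {A B : Matrix (Fin 2) (Fin 2) ℤ} {m : ℕ}
    (hA : ∀ i j, 0 ≤ A i j) (hB : ∀ i j, 0 ≤ B i j) (h : A * B = F ^ m) :
    A = 1 ∨ A = J ∨
      ∃ C n, (∀ i j, 0 ≤ C i j) ∧ A = F * C ∧ m = n + 1 ∧ C * B = F ^ n := by
  have hdet : IsUnit A.det := isUnit_of_mul_isUnit_left (y := B.det) <| by
    rw [← Matrix.det_mul, h, Matrix.det_pow, det_F]
    exact isUnit_one.neg.pow m
  rcases rows_le_or_eq_one_or_eq_J hA hdet with hrow | hrow | hA1 | hAJ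
  · obtain ⟨C, hC, rfl⟩ := (exists_nonneg_F_mul_iff A).2 ⟨hA, hrow⟩
    rw [mul_assoc] at h
    cases m with
    | zero =>
      have := ((exists_nonneg_F_mul_iff _).1 ⟨C * B, Matrix.mul_apply_nonneg hC hB, h.symm⟩).2 1
      simp at this
    | succ n =>
      exact .inr (.inr ⟨C, n, hC, rfl, rfl, isUnit_F.mul_left_cancel (by rw [h, pow_succ'])⟩)
  · obtain ⟨C, hC, hJA⟩ := (exists_nonneg_F_mul_iff (J * A)).2
      ⟨Matrix.mul_apply_nonneg J_nonneg hA, by simpa using hrow⟩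
    have hJF : J * F ^ m = F * (C * B) := by rw [← h, ← mul_assoc, hJA, mul_assoc]
    have := ((exists_nonneg_F_mul_iff _).1 ⟨C * B, Matrix.mul_apply_nonneg hC hB, hJF⟩).2
    exact absurd (by simpa using this) (F_pow_not_row_zero_le_row_one m)
  · exact .inl hA1
  · exact .inr (.inl hAJ)

theorem factor_of_fib_pow_general (A B : Matrix (Fin 2) (Fin 2) ℤ)
    (hA : ∀ i j, 0 ≤ A i j) (hB : ∀ i j, 0 ≤ B i j)
    (m : ℕ) (h : A * B = F ^ m) :
    ∃ k l : ℕ, k + l = m ∧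
      ((A = F ^ k ∧ B = F ^ l) ∨ (A = F ^ k * J ∧ B = J * F ^ l)) := by
  induction m using Nat.strong_induction_on generalizing A B with
  | _ m ih =>
  obtain rfl | rfl | ⟨C, n, hC, rfl, rfl, hCB⟩ := eq_one_or_eq_J_or_eq_F_mul hA hB h
  · exact ⟨0, m, zero_add m, .inl ⟨(pow_zero F).symm, by rwa [one_mul] at h⟩⟩
  · refine ⟨0, m, zero_add m, .inr ⟨by rw [pow_zero, one_mul], ?_⟩⟩
    rw [← h, ← mul_assoc, J_mul_J, one_mul]
  · obtain ⟨k, l, hkl, hAB⟩ := ih n n.lt_succ_self C B hC hB hCB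
    refine ⟨k + 1, l, by omega, ?_⟩
    rcases hAB with ⟨rfl, rfl⟩ | ⟨rfl, rfl⟩
    · exact .inl ⟨(pow_succ' F k).symm, rfl⟩
    · exact .inr ⟨by rw [pow_succ', mul_assoc], rfl⟩

theorem factor_of_fib_pow (A B : Matrix (Fin 2) (Fin 2) ℤ)
    (hA : ∀ i j, 0 ≤ A i j) (hB : ∀ i j, 0 ≤ B i j)
    (m : ℕ) (hm : 1 ≤ m) (h : A * B = F ^ m) :
    ∃ k l : ℕ, k + l = m ∧
      ((A = F ^ k ∧ B = F ^ l) ∨ (A = F ^ k * J ∧ B = J * F ^ l)) :=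
  factor_of_fib_pow_general A B hA hB m h
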